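/- arXiv:2603.02495 — 8 statements merged into one kernel-verified Lean document; each statement's English description precedes it below -/
import Mathlib

section
/- The social welfare function is monotonically increasing: for any revealed target set A ⊆ T and any target t ∈ T \ A, F(A ∪ {t}) ≥ F(A). -/
open Finset

variable {Agent Target : Type*}

def posN [DecidableEq Target] (N : Agent → Finset Target) (f : Target → Bool) (x : Agent) :
    Finset Target :=
  (N x).filter (fun t => f t = true)

def negN [DecidableEq Target] (N : Agent → Finset Target) (f : Target → Bool) (x : Agent) :
    Finset Target :=
  (N x).filter (fun t => f t = false)

/-- The probability mass agent `x` places on positive targets given revealed set `S`. -/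
noncomputable def Q [DecidableEq Target] (N : Agent → Finset Target) (f : Target → Bool)
    (S : Finset Target) (x : Agent) : ℝ :=
  if (posN N f x ∩ S).Nonempty then 1
  else if (N x).Nonempty then
    ((posN N f x).card : ℝ) /
      (((posN N f x).card : ℝ) + (((negN N f x).card : ℝ) - ((negN N f x ∩ S).card : ℝ)))
  else 0

/-- Social welfare. -/
noncomputable def F [Fintype Agent] [DecidableEq Target] (N : Agent → Finset Target)
    (f : Target → Bool) (S : Finset Target) : ℝ :=
  ∑ x, Q N f S x

/-!
Revealing more targets acts on each agent in one of two ways: either a positive neighbour becomes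
revealed, and the agent's value jumps to its maximum `1`, or the agent keeps the value
`δ⁺ / (δ⁺ + r)`, where `r` counts the negative neighbours still unrevealed, and `r` can only
shrink. Either way each agent's value grows, hence so does their sum.
-/

theorem div_add_le_div_add_of_le {p r r' : ℝ} (hp : 0 ≤ p) (hr' : 0 ≤ r') (hrr' : r' ≤ r) :
    p / (p + r) ≤ p / (p + r') := by
  rcases hp.eq_or_lt with rfl | hp
  · simp
  · exact div_le_div_of_nonneg_left hp.le (by positivity) (by linarith)

section Welfare

variable [DecidableEq Target] (N : Agent → Finset Target) (f : Target → Bool)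

theorem card_negN_sub_card_inter (S : Finset Target) (x : Agent) :
    ((negN N f x).card : ℝ) - ((negN N f x ∩ S).card : ℝ) = ((negN N f x \ S).card : ℝ) := by
  rw [← card_sdiff_add_card_inter (negN N f x) S]
  push_cast
  ring

theorem Q_le_one (S : Finset Target) (x : Agent) : Q N f S x ≤ 1 := by
  unfold Q
  split_ifs
  · exact le_rfl
  · rw [card_negN_sub_card_inter]
    exact div_le_one_of_le₀ (le_add_of_nonneg_right (by positivity)) (by positivity)
  · exact zero_le_one

theorem Q_monotone (x : Agent) : Monotone fun S => Q N f S x := by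
  intro S S' hSS'
  by_cases hS' : (posN N f x ∩ S').Nonempty
  · exact (Q_le_one N f S x).trans_eq (if_pos hS').symm
  have hS : ¬(posN N f x ∩ S).Nonempty := fun h => hS' (h.mono (inter_subset_inter_left hSS'))
  simp only [Q, if_neg hS, if_neg hS', card_negN_sub_card_inter]
  split_ifs
  · exact div_add_le_div_add_of_le (by positivity) (by positivity)
      (by exact_mod_cast card_le_card (sdiff_subset_sdiff Subset.rfl hSS'))
  · exact le_rfl

theorem F_monotone [Fintype Agent] : Monotone (F N f) :=
  fun _ _ hSS' => sum_le_sum fun x _ => Q_monotone N f x hSS'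

end Welfare

theorem social_welfare_monotone_general [Fintype Agent] [DecidableEq Target]
    (N : Agent → Finset Target) (f : Target → Bool)
    (A : Finset Target) (t : Target) :
    F N f A ≤ F N f (insert t A) :=
  F_monotone N f (subset_insert t A)

/-- The social welfare function is monotonically increasing: revealing one more
target never decreases welfare. -/
theorem social_welfare_monotone [Fintype Agent] [DecidableEq Target]
    (N : Agent → Finset Target) (f : Target → Bool)
    (A : Finset Target) (t : Target) (ht : t ∉ A) :
    F N f A ≤ F N f (insert t A) :=
  social_welfare_monotone_general N f A t
end

section
/- There exists a bipartite graph with agent set X, target labeling f, and sets A ⊆ B ⊆ T and t ∈ T \ B consisting only of negatively labeled targets, such that F(A ∪ {t}) − F(A) < F(B ∪ {t}) − F(B). In particular, the social welfare function is not submodular when negative targets may be revealed. Concretely, take 4 agents x₁,…,x₄, four positive targets t₁⁺,…,t₄⁺ with xᵢ adjacent to tᵢ⁺, and two negative targets t₅⁻, t₆⁻ each adjacent to all four agents; with A = ∅ and B = {t₅⁻}, one has F(A ∪ {t₆⁻}) − F(A) = 2/3 < 2 = F(B ∪ {t₆⁻}) − F(B). -/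
open Finset

variable {Agent Target : Type*}

/-! Every agent of the instance sees one private positive target and the same two negative
targets, so as long as only negatives are revealed all agents have the same welfare
`1 / (1 + (2 - k))`, where `k` is the number of revealed negatives. This is convex in `k`:
revealing a second negative target gains more than revealing the first. -/

section Uniform

variable [DecidableEq Target] {N : Agent → Finset Target} {f : Target → Bool}
  {S : Finset Target} {x : Agent}

lemma Q_of_disjoint_posN (hS : Disjoint (posN N f x) S) (hN : (N x).Nonempty) :
    Q N f S x = (posN N f x).card /
      ((posN N f x).card + ((negN N f x).card - (negN N f x ∩ S).card : ℝ)) := by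
  rw [Q, if_neg (not_nonempty_iff_eq_empty.mpr (disjoint_iff_inter_eq_empty.mp hS)), if_pos hN]

lemma F_eq_of_uniform [Fintype Agent] {p n k : ℕ} (hp : 0 < p)
    (hpos : ∀ x, (posN N f x).card = p) (hneg : ∀ x, (negN N f x).card = n)
    (hS : ∀ x, Disjoint (posN N f x) S) (hk : ∀ x, (negN N f x ∩ S).card = k) :
    F N f S = Fintype.card Agent * (p / (p + (n - k : ℝ))) := by
  have hN (x : Agent) : (N x).Nonempty :=
    (card_pos.mp ((hpos x).symm ▸ hp)).mono (filter_subset _ _)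
  simp [F, Q_of_disjoint_posN (hS _) (hN _), hpos, hneg, hk]

end Uniform

def exampleNbhd : Fin 4 → Finset (Fin 6) := fun i => {Fin.castLE (by norm_num) i, 4, 5}

def exampleLabel : Fin 6 → Bool := fun s => decide (s.val < 4)

lemma posN_example (i : Fin 4) :
    posN exampleNbhd exampleLabel i = {Fin.castLE (by norm_num) i} := by
  revert i; decide

lemma negN_example (i : Fin 4) : negN exampleNbhd exampleLabel i = {4, 5} := by
  revert i; decide

lemma F_example_of_subset {S : Finset (Fin 6)} (hS : S ⊆ {4, 5}) :
    F exampleNbhd exampleLabel S = 4 * (1 / (1 + (2 - S.card : ℝ))) := by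
  have hpos (i : Fin 4) : Disjoint (posN exampleNbhd exampleLabel i) S := by
    have hi : Fin.castLE (by norm_num) i ∉ ({4, 5} : Finset (Fin 6)) := by revert i; decide
    rw [posN_example, disjoint_singleton_left]
    exact fun h => hi (hS h)
  simpa only [Nat.cast_one, Nat.cast_ofNat, Fintype.card_fin] using
    F_eq_of_uniform (p := 1) (n := 2) (k := S.card) one_pos
    (fun i => by rw [posN_example, card_singleton])
    (fun i => by rw [negN_example]; rfl) hpos
    (fun i => by rw [negN_example, inter_eq_right.mpr hS])

/-- There exists a bipartite instance (4 agents, each adjacent to a private positive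
target and to two common negative targets) and sets `A ⊆ B` of negatively labeled
targets with `t ∉ B` negative, on which the social welfare function violates
submodularity: `F(A ∪ {t}) − F(A) = 2/3 < 2 = F(B ∪ {t}) − F(B)`. -/
theorem social_welfare_not_submodular_with_negatives :
    ∃ (N : Fin 4 → Finset (Fin 6)) (f : Fin 6 → Bool)
      (A B : Finset (Fin 6)) (t : Fin 6),
      (∀ i : Fin 4, N i = {Fin.castLE (by norm_num) i, 4, 5}) ∧
      (∀ s : Fin 6, f s = decide (s.val < 4)) ∧
      A ⊆ B ∧ t ∉ B ∧ (∀ s ∈ insert t B, f s = false) ∧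
      F N f (insert t A) - F N f A = 2 / 3 ∧
      F N f (insert t B) - F N f B = 2 ∧
      F N f (insert t A) - F N f A < F N f (insert t B) - F N f B := by
  have hA : F exampleNbhd exampleLabel ∅ = 4 / 3 := by
    rw [F_example_of_subset (empty_subset _)]; norm_num
  have hAt : F exampleNbhd exampleLabel {5} = 2 := by
    rw [F_example_of_subset (by decide)]; norm_num
  have hB : F exampleNbhd exampleLabel {4} = 2 := by
    rw [F_example_of_subset (by decide)]; norm_num
  have hBt : F exampleNbhd exampleLabel {5, 4} = 4 := by
    rw [F_example_of_subset (by decide), card_pair (by decide)]; norm_num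
  refine ⟨exampleNbhd, exampleLabel, ∅, {4}, 5, fun _ => rfl, fun _ => rfl,
    empty_subset _, by decide, by decide, ?_, ?_, ?_⟩ <;>
    simp only [insert_empty_eq, hA, hAt, hB, hBt] <;> norm_num
end

section
/- If every agent is c-bounded (has at most c negatively labeled neighbors, with c ≥ 1) and has at least one positive neighbor whenever it contributes positive welfare, then for every revealed set S: F_p(S) ≤ F(S) ≤ c·F_p(S), where F_p is the proxy social welfare. -/
open Finset

variable {Agent Target : Type*}

/-- The proxy probability mass: revealing negative neighbors beyond the first only
contributes the amount the first one helped. -/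
noncomputable def Qp [DecidableEq Target] (N : Agent → Finset Target) (f : Target → Bool)
    (S : Finset Target) (x : Agent) : ℝ :=
  if (posN N f x ∩ S).Nonempty then 1
  else if (N x).Nonempty then
    ((posN N f x).card : ℝ) /
        (((N x).card : ℝ) - (if 1 ≤ (negN N f x ∩ S).card then 1 else 0)) *
      (1 + (((negN N f x ∩ S).card - 1 : ℕ) : ℝ) / ((N x).card : ℝ))
  else 0

/-- Proxy social welfare. -/
noncomputable def Fp [Fintype Agent] [DecidableEq Target] (N : Agent → Finset Target)
    (f : Target → Bool) (S : Finset Target) : ℝ :=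
  ∑ x, Qp N f S x

/-!
Both welfares are sums over agents, so it suffices to compare `Q` and `Qp` agent by agent.
They coincide when a positive neighbour is revealed, when `N x = ∅` and when no negative
neighbour is revealed. Otherwise, with `p` positive and `n` negative neighbours, `1 ≤ k ≤ n`
of the latter revealed and `D = p + n`, one has `Q = p / (D - k)` and
`Qp = p (D + k - 1) / ((D - 1) D)`. The lower bound is `(D + k - 1)(D - k) ≤ (D - 1) D`,
i.e. `k ≤ k²`; the upper bound multiplies `D - 1 ≤ c (D - k)` (from `n ≤ c`, `p ≥ 1`) with
`D ≤ D + k - 1`.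
-/

lemma card_posN_add_card_negN [DecidableEq Target] (N : Agent → Finset Target)
    (f : Target → Bool) (x : Agent) : #(posN N f x) + #(negN N f x) = #(N x) := by
  simpa [posN, negN] using card_filter_add_card_filter_not (s := N x) (fun t => f t = true)

lemma proxy_ratio_eq {p n k : ℕ} (hp : 0 < p) (hk : 1 ≤ k) (hkn : k ≤ n) :
    (p : ℝ) / ((p + n : ℝ) - 1) * (1 + ((k : ℝ) - 1) / (p + n)) =
      p * (p + n + k - 1) / ((p + n - 1) * (p + n)) := by
  have hD : (1 : ℝ) < p + n := by
    have : (1 : ℝ) ≤ p := by exact_mod_cast hp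
    have : (1 : ℝ) ≤ n := by exact_mod_cast hk.trans hkn
    linarith
  field_simp [(sub_pos.2 hD).ne', (zero_lt_one.trans hD).ne']
  ring

lemma proxy_ratio_le_ratio {p n k : ℕ} (hk : 1 ≤ k) (hkn : k ≤ n) :
    (p : ℝ) / ((p + n : ℝ) - 1) * (1 + ((k : ℝ) - 1) / (p + n)) ≤ p / (p + ((n : ℝ) - k)) := by
  rcases p.eq_zero_or_pos with rfl | hp
  · simp
  rw [proxy_ratio_eq hp hk hkn]
  have hp' : (1 : ℝ) ≤ p := by exact_mod_cast hp
  have hk' : (1 : ℝ) ≤ k := by exact_mod_cast hk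
  have hkn' : (k : ℝ) ≤ n := by exact_mod_cast hkn
  rw [div_le_div_iff₀ (by nlinarith) (by linarith), mul_assoc]
  exact mul_le_mul_of_nonneg_left (by nlinarith) (by positivity)

lemma ratio_le_mul_proxy_ratio {p n k c : ℕ} (hk : 1 ≤ k) (hkn : k ≤ n) (hnc : n ≤ c) :
    (p : ℝ) / (p + ((n : ℝ) - k)) ≤
      c * ((p : ℝ) / ((p + n : ℝ) - 1) * (1 + ((k : ℝ) - 1) / (p + n))) := by
  rcases p.eq_zero_or_pos with rfl | hp
  · simp
  rw [proxy_ratio_eq hp hk hkn]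
  have hp' : (1 : ℝ) ≤ p := by exact_mod_cast hp
  have hk' : (1 : ℝ) ≤ k := by exact_mod_cast hk
  have hkn' : (k : ℝ) ≤ n := by exact_mod_cast hkn
  have hnc' : (n : ℝ) ≤ c := by exact_mod_cast hnc
  -- `c (p + n - k) ≥ c p ≥ p + c - 1 ≥ p + n - 1`
  have hD : (p + n - 1 : ℝ) ≤ c * (p + (n - k)) := by
    nlinarith [mul_nonneg (by linarith : (0 : ℝ) ≤ c - 1) (by linarith : (0 : ℝ) ≤ p - 1)]
  rw [mul_div_assoc', div_le_div_iff₀ (by linarith) (by nlinarith)]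
  calc (p : ℝ) * ((p + n - 1) * (p + n))
      ≤ p * ((c * (p + (n - k))) * (p + n + k - 1)) := by gcongr; all_goals linarith
    _ = c * (p * (p + n + k - 1)) * (p + (n - k)) := by ring

lemma Qp_le_Q_and_Q_le_mul_Qp [DecidableEq Target] (N : Agent → Finset Target)
    (f : Target → Bool) {c : ℕ} (hc : 1 ≤ c) {x : Agent} (hx : #(negN N f x) ≤ c)
    (S : Finset Target) : Qp N f S x ≤ Q N f S x ∧ Q N f S x ≤ c * Qp N f S x := by
  have hc' : (1 : ℝ) ≤ c := by exact_mod_cast hc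
  have hN : (#(N x) : ℝ) = #(posN N f x) + #(negN N f x) := by
    rw [← card_posN_add_card_negN]; push_cast; rfl
  have hkn : #(negN N f x ∩ S) ≤ #(negN N f x) := card_le_card inter_subset_left
  unfold Q Qp
  split_ifs with _ _ hk
  · exact ⟨le_rfl, by simpa using hc'⟩
  · rw [Nat.cast_sub hk, hN, Nat.cast_one]
    exact ⟨proxy_ratio_le_ratio hk hkn, ratio_le_mul_proxy_ratio hk hkn hx⟩
  · obtain hk0 : #(negN N f x ∩ S) = 0 := by omega
    simp only [hk0, hN, Nat.zero_sub, CharP.cast_eq_zero, zero_div, add_zero, sub_zero, mul_one]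
    exact ⟨le_rfl, le_mul_of_one_le_left (by positivity) hc'⟩
  · simp

theorem proxy_welfare_bounds_general [Fintype Agent] [DecidableEq Target]
    (N : Agent → Finset Target) (f : Target → Bool)
    (c : ℕ) (hc : 1 ≤ c)
    (hbounded : ∀ x : Agent, (negN N f x).card ≤ c) :
    ∀ S : Finset Target, Fp N f S ≤ F N f S ∧ F N f S ≤ (c : ℝ) * Fp N f S := by
  intro S
  have hQ x := Qp_le_Q_and_Q_le_mul_Qp N f hc (hbounded x) S
  refine ⟨sum_le_sum fun x _ => (hQ x).1, ?_⟩
  rw [Fp, mul_sum]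
  exact sum_le_sum fun x _ => (hQ x).2

/-- If every agent is `c`-bounded (at most `c` negative neighbors, `c ≥ 1`) and every
agent contributing positive welfare has a positive neighbor, then for every revealed
set `S`: `F_p(S) ≤ F(S) ≤ c·F_p(S)`. -/
theorem proxy_welfare_bounds [Fintype Agent] [DecidableEq Target]
    (N : Agent → Finset Target) (f : Target → Bool)
    (c : ℕ) (hc : 1 ≤ c)
    (hbounded : ∀ x : Agent, (negN N f x).card ≤ c)
    (hpos : ∀ (x : Agent) (S : Finset Target), 0 < Q N f S x → 0 < (posN N f x).card) :
    ∀ S : Finset Target, Fp N f S ≤ F N f S ∧ F N f S ≤ (c : ℝ) * Fp N f S :=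
  proxy_welfare_bounds_general N f c hc hbounded
end

section
/- If a₁ ≥ a₂ ≥ … ≥ a_K ≥ 0 are nonnegative reals, w ≥ 1 an integer with K ≥ w, and K_a = ⌈K/w⌉, then Σ_{i=1}^{K_a} aᵢ ≥ (1/w) Σ_{i=1}^{K} aᵢ. -/
/-!
Replace each `aᵢ` with `a_{⌊i/w⌋}`, which is at least as large by monotonicity. After padding
with nonnegative terms up to `w · ⌈K/w⌉`, the new sum consists of `w` copies of each of the first
`⌈K/w⌉` terms.
-/

open Finset

theorem Finset.sum_range_mul_comp_div {M : Type*} [AddCommMonoid M] (f : ℕ → M) (w m : ℕ) :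
    ∑ i ∈ range (w * m), f (i / w) = w • ∑ i ∈ range m, f i := by
  induction m with
  | zero => simp
  | succ m ih =>
    have hblock : ∀ j ∈ range w, f ((w * m + j) / w) = f m := fun j hj => by
      have hj : j < w := mem_range.1 hj
      rw [Nat.mul_add_div (by omega), Nat.div_eq_of_lt hj, add_zero]
    rw [Nat.mul_succ, sum_range_add, ih, sum_congr rfl hblock, sum_const, card_range,
      sum_range_succ, nsmul_add]

theorem Finset.sum_range_le_nsmul_sum_range {M : Type*} [AddCommMonoid M] [PartialOrder M]
    [IsOrderedAddMonoid M] {a : ℕ → M} {K w m : ℕ} (hKm : K ≤ w * m)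
    (hnonneg : ∀ i < m, 0 ≤ a i) (hmono : ∀ i j, i ≤ j → j < K → a j ≤ a i) :
    ∑ i ∈ range K, a i ≤ w • ∑ i ∈ range m, a i :=
  calc ∑ i ∈ range K, a i
      ≤ ∑ i ∈ range K, a (i / w) :=
        sum_le_sum fun i hi => hmono _ _ (Nat.div_le_self i w) (mem_range.1 hi)
    _ ≤ ∑ i ∈ range (w * m), a (i / w) :=
        sum_le_sum_of_subset_of_nonneg (range_subset_range.2 hKm) fun _ hi _ =>
          hnonneg _ (Nat.div_lt_of_lt_mul (mem_range.1 hi))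
    _ = w • ∑ i ∈ range m, a i := sum_range_mul_comp_div a w m

theorem first_ceil_div_sum_ge_general (K w : ℕ) (hw : 1 ≤ w) (a : ℕ → ℝ)
    (hnonneg : ∀ i, i < K → 0 ≤ a i)
    (hmono : ∀ i j, i ≤ j → j < K → a j ≤ a i) :
    (1 / (w : ℝ)) * ∑ i ∈ Finset.range K, a i ≤ ∑ i ∈ Finset.range ((K + w - 1) / w), a i := by
  rw [← Nat.ceilDiv_eq_add_pred_div]
  have hKm : K ≤ w * (K ⌈/⌉ w) := (ceilDiv_le_iff_le_mul hw).1 le_rfl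
  have hmK : K ⌈/⌉ w ≤ K := (ceilDiv_le_iff_le_mul hw).2 (Nat.le_mul_of_pos_left K hw)
  have key := sum_range_le_nsmul_sum_range hKm (fun i hi => hnonneg i (hi.trans_le hmK)) hmono
  rw [nsmul_eq_mul] at key
  rw [one_div, inv_mul_le_iff₀ (by exact_mod_cast hw)]
  exact key

/-- Averaging lemma: for a non-increasing sequence of nonnegative reals `a₀ ≥ … ≥ a_{K−1}`
and `K ≥ w ≥ 1`, the sum of the first `⌈K/w⌉` terms is at least `1/w` of the total sum. -/
theorem first_ceil_div_sum_ge (K w : ℕ) (hw : 1 ≤ w) (hK : w ≤ K) (a : ℕ → ℝ)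
    (hnonneg : ∀ i, i < K → 0 ≤ a i)
    (hmono : ∀ i j, i ≤ j → j < K → a j ≤ a i) :
    (1 / (w : ℝ)) * ∑ i ∈ Finset.range K, a i ≤ ∑ i ∈ Finset.range ((K + w - 1) / w), a i :=
  first_ceil_div_sum_ge_general K w hw a hnonneg hmono
end

section
/- In the max-K-cover reduction graph, for any set S of revealed positive targets the social welfare equals n/2 + (1/2)·|⋃_{t_j ∈ S} C_j|. Consequently, F(S) ≥ n/2 + E/2 if and only if the sets corresponding to S cover at least E elements. -/
/-! Every element agent has exactly as many private negative targets as positive ones (at least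
one), and revealing positive targets never reveals a negative one. So an agent contributes `1`
if one of its sets is chosen and `δ⁺/(δ⁺ + δ⁻) = 1/2` otherwise, and summing over the `n`
agents gives `n/2 + |⋃_{j ∈ S} C_j|/2`. -/

open Finset

variable {Agent Target : Type*}

section Welfare

variable [DecidableEq Target] (N : Agent → Finset Target)
  (f : Target → Bool) (S : Finset Target) (x : Agent)

theorem Q_eq_one_half_of_balanced (hpos : ¬(posN N f x ∩ S).Nonempty)
    (hneg : Disjoint (negN N f x) S) (hcard : #(posN N f x) = #(negN N f x))
    (hne : (posN N f x).Nonempty) :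
    Q N f S x = 1 / 2 := by
  have hNx : (N x).Nonempty := hne.mono (filter_subset _ _)
  have hcard_ne : (#(posN N f x) : ℝ) ≠ 0 := by exact_mod_cast hne.card_pos.ne'
  rw [Q, if_neg hpos, if_pos hNx, disjoint_iff_inter_eq_empty.mp hneg, card_empty, ← hcard,
    Nat.cast_zero, sub_zero, ← two_mul, div_mul_cancel_right₀ hcard_ne, one_div]

theorem Q_eq_ite_of_balanced (hneg : Disjoint (negN N f x) S)
    (hcard : #(posN N f x) = #(negN N f x)) (hne : (posN N f x).Nonempty) :
    Q N f S x = if (posN N f x ∩ S).Nonempty then 1 else 1 / 2 := by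
  split_ifs with hpos
  · exact if_pos hpos
  · exact Q_eq_one_half_of_balanced N f S x hpos hneg hcard hne

end Welfare

theorem sum_ite_mem_one_one_half {α : Type*} [Fintype α] [DecidableEq α] (T : Finset α) :
    ∑ x, (if x ∈ T then (1 : ℝ) else 1 / 2) = Fintype.card α / 2 + #T / 2 := by
  have hsplit : ∀ x, (if x ∈ T then (1 : ℝ) else 1 / 2) = 1 / 2 + if x ∈ T then 1 / 2 else 0 := by
    intro x
    split_ifs <;> norm_num
  rw [sum_congr rfl fun x _ => hsplit x, sum_add_distrib, sum_ite_mem, univ_inter, sum_const,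
    sum_const, card_univ, nsmul_eq_mul, nsmul_eq_mul]
  ring

section CoverReduction

variable {α ι : Type*} [DecidableEq α] [Fintype ι] [DecidableEq ι] {C : ι → Finset α}
  {N : α → Finset (ι ⊕ α × ι)} {f : ι ⊕ α × ι → Bool}

def coverReductionNbhd (C : ι → Finset α) (i : α) : Finset (ι ⊕ α × ι) :=
  ((univ.filter fun j => i ∈ C j).image Sum.inl) ∪
    ((univ.filter fun j => i ∈ C j).image fun j => Sum.inr (i, j))

theorem posN_coverReduction (hN : ∀ i, N i = coverReductionNbhd C i)
    (hf : ∀ t, f t = t.isLeft) (i : α) :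
    posN N f i = (univ.filter fun j => i ∈ C j).image Sum.inl := by
  ext t
  rcases t with j | ⟨i', j⟩ <;> simp [posN, coverReductionNbhd, hN, hf]

theorem negN_coverReduction (hN : ∀ i, N i = coverReductionNbhd C i)
    (hf : ∀ t, f t = t.isLeft) (i : α) :
    negN N f i = (univ.filter fun j => i ∈ C j).image fun j => Sum.inr (i, j) := by
  ext t
  rcases t with j | ⟨i', j⟩ <;> simp [negN, coverReductionNbhd, hN, hf]

theorem Q_coverReduction (hN : ∀ i, N i = coverReductionNbhd C i)
    (hf : ∀ t, f t = t.isLeft) (S : Finset ι) {i : α} (hi : ∃ j, i ∈ C j) :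
    Q N f (S.image Sum.inl) i = if i ∈ S.biUnion C then 1 else 1 / 2 := by
  have hpos := posN_coverReduction hN hf i
  have hneg := negN_coverReduction hN hf i
  have hdisj : Disjoint (negN N f i) (S.image Sum.inl) := by
    simp [hneg, disjoint_left]
  have hcard : #(posN N f i) = #(negN N f i) := by
    rw [hpos, hneg, card_image_of_injective _ Sum.inl_injective,
      card_image_of_injective _ fun _ _ h => by simpa using h]
  have hne : (posN N f i).Nonempty := by
    obtain ⟨j, hj⟩ := hi
    exact hpos ▸ ⟨Sum.inl j, by simpa using hj⟩
  have hrevealed : (posN N f i ∩ S.image Sum.inl).Nonempty ↔ i ∈ S.biUnion C := by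
    simp [hpos, Finset.Nonempty, and_comm]
  rw [Q_eq_ite_of_balanced N f _ i hdisj hcard hne]
  exact if_congr hrevealed rfl rfl

theorem F_coverReduction [Fintype α] (hcover : ∀ i, ∃ j, i ∈ C j)
    (hN : ∀ i, N i = coverReductionNbhd C i)
    (hf : ∀ t, f t = t.isLeft) (S : Finset ι) :
    F N f (S.image Sum.inl) = Fintype.card α / 2 + #(S.biUnion C) / 2 := by
  rw [F, ← sum_ite_mem_one_one_half]
  exact sum_congr rfl fun i _ => Q_coverReduction hN hf S (hcover i)

end CoverReduction

/-- In the max-K-cover reduction graph (one agent per element, one positive target per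
set, edge iff membership, and one private negative target per positive edge so that
`δ⁻ₓ = δ⁺ₓ ≥ 1`), the welfare of any set `S` of revealed positive targets equals
`n/2 + |⋃_{j ∈ S} C_j|/2`; hence `F(S) ≥ n/2 + E/2` iff `S` covers at least `E`
elements. -/
theorem max_cover_reduction_welfare (n m : ℕ) (C : Fin m → Finset (Fin n))
    (hcover : ∀ i : Fin n, ∃ j : Fin m, i ∈ C j)
    (N : Fin n → Finset (Fin m ⊕ Fin n × Fin m))
    (hN : ∀ i : Fin n, N i =
      ((Finset.univ.filter fun j => i ∈ C j).image Sum.inl) ∪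
        ((Finset.univ.filter fun j => i ∈ C j).image fun j => Sum.inr (i, j)))
    (f : Fin m ⊕ Fin n × Fin m → Bool) (hf : ∀ t, f t = t.isLeft)
    (S : Finset (Fin m)) :
    F N f (S.image Sum.inl) = (n : ℝ) / 2 + ((S.biUnion C).card : ℝ) / 2 ∧
    ∀ E : ℕ, ((n : ℝ) / 2 + (E : ℝ) / 2 ≤ F N f (S.image Sum.inl) ↔
      E ≤ (S.biUnion C).card) := by
  have hF : F N f (S.image Sum.inl) = (n : ℝ) / 2 + ((S.biUnion C).card : ℝ) / 2 := by
    simpa using F_coverReduction hcover hN hf S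
  refine ⟨hF, fun E => ?_⟩
  rw [hF, add_le_add_iff_left, div_le_div_iff_of_pos_right two_pos, Nat.cast_le]
end

section
/- In the K-clique reduction graph built from a θ-regular graph G_c = (V, E_c) with n = |E_c| edges, for any set S of K revealed negative vertex-targets the social welfare equals n/3 + (1/6)·e(S, V∖S) + (2/3)·e(S), where e(S) is the number of edges of G_c with both endpoints in S and e(S, V∖S) the number of edges with exactly one endpoint in S. In particular, since e(S, V∖S) + 2·e(S) = Kθ, the welfare equals n/3 + Kθ/6 + e(S)/3, and it is at least n/3 + Kθ/6 + (1/3)·binom(K,2) if and only if S is a K-clique in G_c. -/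
open Finset

variable {V : Type*} [Fintype V] [DecidableEq V]

/-- The welfare contribution of the agent associated with an edge, given a set `S` of
revealed negative vertex-targets: `1` if both endpoints are in `S`, `1/2` if exactly
one is, and `1/3` otherwise. -/
noncomputable def edgeWelfare (S : Finset V) : Sym2 V → ℝ :=
  Sym2.lift ⟨fun u v =>
    if u ∈ S then (if v ∈ S then 1 else 1 / 2) else (if v ∈ S then 1 / 2 else 1 / 3),
    by intro u v; by_cases hu : u ∈ S <;> by_cases hv : v ∈ S <;> simp [hu, hv]⟩

/-- Whether both endpoints of an edge lie in `S`. -/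
def bothIn (S : Finset V) : Sym2 V → Bool :=
  Sym2.lift ⟨fun u v => decide (u ∈ S) && decide (v ∈ S), fun _ _ => Bool.and_comm _ _⟩

/-- Whether exactly one endpoint of an edge lies in `S`. -/
def exactlyOneIn (S : Finset V) : Sym2 V → Bool :=
  Sym2.lift ⟨fun u v => xor (decide (u ∈ S)) (decide (v ∈ S)), fun _ _ => Bool.xor_comm _ _⟩

/-! Every agent earns `1/3`, plus `1/6` if its edge leaves `S` and `2/3` if its edge lies inside
`S`; summing over the edges gives the first formula. Summing degrees over `S` counts each edge
leaving `S` once and each edge inside `S` twice, so regularity gives `e(S, V∖S) + 2·e(S) = Kθ`.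
Finally the edges inside `S` inject into the `C(K, 2)` unordered pairs of distinct vertices of `S`,
and the injection is onto exactly when `S` is a clique. -/

section

variable {α : Type*} [DecidableEq α] (S : Finset α)

theorem edgeWelfare_eq (e : Sym2 α) :
    edgeWelfare S e = 1 / 3 + 1 / 6 * (if exactlyOneIn S e then 1 else 0) +
      2 / 3 * (if bothIn S e then 1 else 0) := by
  induction e using Sym2.ind with
  | _ u v =>
    by_cases hu : u ∈ S <;> by_cases hv : v ∈ S <;>
      norm_num [edgeWelfare, exactlyOneIn, bothIn, hu, hv]

theorem sum_edgeWelfare (E : Finset (Sym2 α)) :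
    ∑ e ∈ E, edgeWelfare S e =
      (#E : ℝ) / 3 + (#{e ∈ E | exactlyOneIn S e} : ℝ) / 6 +
        2 * (#{e ∈ E | bothIn S e} : ℝ) / 3 := by
  simp only [edgeWelfare_eq, sum_add_distrib, ← mul_sum, sum_boole, sum_const, nsmul_eq_mul]
  ring

theorem card_filter_mem_of_not_isDiag {e : Sym2 α} (he : ¬e.IsDiag) :
    #{v ∈ S | v ∈ e} =
      (if exactlyOneIn S e then 1 else 0) + 2 * (if bothIn S e then 1 else 0) := by
  induction e using Sym2.ind with
  | _ u v =>
    have huv : u ≠ v := by simpa using he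
    have hpair : {w ∈ S | w ∈ s(u, v)} = {w ∈ ({u, v} : Finset α) | w ∈ S} := by
      ext w; simp [and_comm]
    rw [hpair, filter_insert, filter_singleton]
    by_cases hu : u ∈ S <;> by_cases hv : v ∈ S <;>
      simp [hu, hv, exactlyOneIn, bothIn, card_pair huv]

variable [Fintype α] (G : SimpleGraph α) [DecidableRel G.Adj]

theorem sum_degree_eq_card_exactlyOneIn_add_two_mul_card_bothIn :
    ∑ v ∈ S, G.degree v =
      #{e ∈ G.edgeFinset | exactlyOneIn S e} + 2 * #{e ∈ G.edgeFinset | bothIn S e} :=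
  calc ∑ v ∈ S, G.degree v = ∑ v ∈ S, #{e ∈ G.edgeFinset | v ∈ e} := by
        simp only [← G.card_incidenceFinset_eq_degree, G.incidenceFinset_eq_filter]
    _ = ∑ e ∈ G.edgeFinset, #{v ∈ S | v ∈ e} :=
        sum_card_bipartiteAbove_eq_sum_card_bipartiteBelow (· ∈ ·)
    _ = ∑ e ∈ G.edgeFinset,
          ((if exactlyOneIn S e then 1 else 0) + 2 * (if bothIn S e then 1 else 0)) :=
        sum_congr rfl fun e he =>
          card_filter_mem_of_not_isDiag S (G.not_isDiag_of_mem_edgeSet (G.mem_edgeFinset.1 he))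
    _ = _ := by simp only [sum_add_distrib, ← mul_sum, sum_boole, Nat.cast_id]

theorem mk_mem_filter_bothIn {u v : α} :
    s(u, v) ∈ {e ∈ G.edgeFinset | bothIn S e} ↔ G.Adj u v ∧ u ∈ S ∧ v ∈ S := by
  rw [mem_filter, G.mem_edgeFinset, G.mem_edgeSet]
  simp [bothIn]

theorem filter_bothIn_subset_image_offDiag :
    {e ∈ G.edgeFinset | bothIn S e} ⊆ S.offDiag.image Sym2.mk.uncurry := by
  intro e he
  induction e using Sym2.ind with
  | _ u v =>
    obtain ⟨huv, hu, hv⟩ := (mk_mem_filter_bothIn S G).1 he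
    exact mem_image.2 ⟨(u, v), mem_offDiag.2 ⟨hu, hv, G.ne_of_adj huv⟩, rfl⟩

theorem isClique_iff_image_offDiag_subset :
    G.IsClique (S : Set α) ↔
      S.offDiag.image Sym2.mk.uncurry ⊆ {e ∈ G.edgeFinset | bothIn S e} := by
  simp only [subset_iff, mem_image, mem_offDiag, Prod.exists, Function.uncurry_apply_pair]
  constructor
  · rintro hS _ ⟨u, v, ⟨hu, hv, huv⟩, rfl⟩
    exact (mk_mem_filter_bothIn S G).2 ⟨hS hu hv huv, hu, hv⟩
  · intro h u hu v hv huv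
    exact ((mk_mem_filter_bothIn S G).1 (h ⟨u, v, ⟨hu, hv, huv⟩, rfl⟩)).1

theorem choose_two_le_card_filter_bothIn_iff :
    (#S).choose 2 ≤ #{e ∈ G.edgeFinset | bothIn S e} ↔ G.IsClique (S : Set α) := by
  rw [isClique_iff_image_offDiag_subset, ← Sym2.card_image_offDiag]
  constructor
  · intro h
    exact (eq_of_subset_of_card_le (filter_bothIn_subset_image_offDiag S G) h).ge
  · exact card_le_card

end

/-- In the K-clique reduction graph built from a `θ`-regular graph `G_c` with `n` edges,
for any set `S` of `K` revealed negative vertex-targets the social welfare equals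
`n/3 + e(S, V∖S)/6 + 2·e(S)/3`; since `e(S,V∖S) + 2·e(S) = Kθ` it also equals
`n/3 + Kθ/6 + e(S)/3`, and it is at least `n/3 + Kθ/6 + C(K,2)/3` iff `S` is a
`K`-clique of `G_c`. -/
theorem clique_reduction_welfare (G : SimpleGraph V) [DecidableRel G.Adj]
    (θ K : ℕ) (hreg : G.IsRegularOfDegree θ)
    (S : Finset V) (hS : S.card = K) :
    (∑ e ∈ G.edgeFinset, edgeWelfare S e) =
        (G.edgeFinset.card : ℝ) / 3 +
          ((G.edgeFinset.filter fun e => exactlyOneIn S e).card : ℝ) / 6 +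
          2 * ((G.edgeFinset.filter fun e => bothIn S e).card : ℝ) / 3 ∧
    (G.edgeFinset.filter fun e => exactlyOneIn S e).card +
        2 * (G.edgeFinset.filter fun e => bothIn S e).card = K * θ ∧
    (∑ e ∈ G.edgeFinset, edgeWelfare S e) =
        (G.edgeFinset.card : ℝ) / 3 + (K : ℝ) * (θ : ℝ) / 6 +
          ((G.edgeFinset.filter fun e => bothIn S e).card : ℝ) / 3 ∧
    ((G.edgeFinset.card : ℝ) / 3 + (K : ℝ) * (θ : ℝ) / 6 + (K.choose 2 : ℝ) / 3 ≤
        ∑ e ∈ G.edgeFinset, edgeWelfare S e ↔ G.IsClique (S : Set V)) := by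
  have hW := sum_edgeWelfare S G.edgeFinset
  have hdeg : #{e ∈ G.edgeFinset | exactlyOneIn S e} + 2 * #{e ∈ G.edgeFinset | bothIn S e} =
      K * θ := by
    rw [← sum_degree_eq_card_exactlyOneIn_add_two_mul_card_bothIn,
      sum_congr rfl fun v _ => hreg v, sum_const, hS, smul_eq_mul]
  have hdeg_real : (#{e ∈ G.edgeFinset | exactlyOneIn S e} : ℝ) +
      2 * #{e ∈ G.edgeFinset | bothIn S e} = K * θ := by
    exact_mod_cast hdeg
  have hW' : ∑ e ∈ G.edgeFinset, edgeWelfare S e = (#G.edgeFinset : ℝ) / 3 + K * θ / 6 +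
      (#{e ∈ G.edgeFinset | bothIn S e} : ℝ) / 3 := by
    rw [hW]; linarith
  refine ⟨hW, hdeg, hW', ?_⟩
  rw [hW', add_le_add_iff_left, div_le_div_iff_of_pos_right three_pos, Nat.cast_le, ← hS,
    choose_two_le_card_filter_bothIn_iff]
end

section
/- For an agent x with δ⁺ₓ = 1 positive neighbor and δ⁻ₓ negative neighbors with 1 ≤ δ⁻ₓ ≤ c, revealing all δ⁻ₓ negative neighbors (the set S) gives a true increase Q^S(x) − Q^∅(x) = 1 − 1/(1+δ⁻ₓ) and a proxy increase Q_p^S(x) − Q_p^∅(x) = (1/δ⁻ₓ)·(2δ⁻ₓ/(1+δ⁻ₓ)) − 1/(1+δ⁻ₓ) = 1/(1+δ⁻ₓ); hence the ratio of proxy increase to true increase equals 1/δ⁻ₓ ≥ 1/c. -/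
open Finset

variable {Agent Target : Type*}

/-- For an agent with exactly one positive neighbor and `d` negative neighbors
(`1 ≤ d ≤ c`), revealing all `d` negative neighbors increases the true probability
mass by `1 − 1/(1+d)` and the proxy mass by `1/(1+d)`; the ratio of proxy increase to
true increase is exactly `1/d ≥ 1/c`. -/
theorem single_pos_all_neg_reveal [DecidableEq Target]
    (N : Agent → Finset Target) (f : Target → Bool)
    (x : Agent) (c d : ℕ) (hd : 1 ≤ d) (hdc : d ≤ c)
    (hpos : (posN N f x).card = 1) (hneg : (negN N f x).card = d)
    (S : Finset Target) (hSneg : negN N f x ⊆ S) (hSpos : posN N f x ∩ S = ∅) :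
    Q N f S x - Q N f ∅ x = 1 - 1 / (1 + (d : ℝ)) ∧
    Qp N f S x - Qp N f ∅ x = 1 / (1 + (d : ℝ)) ∧
    Qp N f S x - Qp N f ∅ x = (1 / (d : ℝ)) * (Q N f S x - Q N f ∅ x) ∧
    1 / (c : ℝ) ≤ 1 / (d : ℝ) := by
  have hNcard : (N x).card = 1 + d := by
    rw [← hpos, ← hneg, posN, negN]
    have h2 : filter (fun t => f t = false) (N x) = filter (fun t => ¬ f t = true) (N x) :=
      filter_congr (by simp)
    rw [h2, card_filter_add_card_filter_not (p := fun t => f t = true)]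
  have hNne : (N x).Nonempty := by
    rw [← card_pos, hNcard]; omega
  have hnegS : negN N f x ∩ S = negN N f x := inter_eq_left.mpr hSneg
  have hposE : ¬ (posN N f x ∩ S).Nonempty := by simp [hSpos]
  have hposE0 : ¬ (posN N f x ∩ (∅ : Finset Target)).Nonempty := by simp
  have hd0 : (0:ℝ) < d := by positivity
  have hd1 : (0:ℝ) < 1 + (d:ℝ) := by positivity
  have hQS : Q N f S x = 1 := by
    rw [Q, if_neg hposE, if_pos hNne, hnegS, hpos, hneg]
    simp
  have hQ0 : Q N f ∅ x = 1 / (1 + (d:ℝ)) := by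
    rw [Q, if_neg hposE0, if_pos hNne, hpos, hneg]
    simp
  have hQpS : Qp N f S x = 1 / (d:ℝ) * (1 + ((d:ℝ) - 1) / (1 + d)) := by
    rw [Qp, if_neg hposE, if_pos hNne, hnegS, hpos, hneg, hNcard, if_pos hd]
    have : ((d - 1 : ℕ) : ℝ) = (d:ℝ) - 1 := by
      have := Nat.cast_sub (R := ℝ) hd; simpa using this
    rw [this]
    push_cast
    ring_nf
  have hQp0 : Qp N f ∅ x = 1 / (1 + (d:ℝ)) := by
    rw [Qp, if_neg hposE0, if_pos hNne, hpos, hNcard]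
    simp
  refine ⟨by rw [hQS, hQ0], ?_, ?_, ?_⟩
  · rw [hQpS, hQp0]; field_simp; ring
  · rw [hQpS, hQp0, hQS, hQ0]; field_simp; ring
  · have hc0 : (0:ℝ) < c := by
      have : 1 ≤ c := le_trans hd hdc
      positivity
    apply one_div_le_one_div_of_le hd0
    exact_mod_cast hdc
end

section
/- For a monotone submodular function F with F(∅) = 0 on subsets of a finite set T, the greedy algorithm that iteratively adds the element of maximum marginal gain produces, after K steps, a set S_g with F(S_g) ≥ (1 − (1 − 1/K)^K)·max_{|S| ≤ K} F(S) ≥ (1 − 1/e)·max_{|S| ≤ K} F(S). -/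
/-!
If `S` has at most `K` elements, monotonicity and submodularity give
`F S - F A ≤ ∑ t ∈ S, (F (insert t A) - F A) ≤ K · (greedy gain at A)`,
so each greedy step closes at least a `1/K` fraction of the remaining gap `F S - F (seq i)`.
After `K` steps the gap is at most `(1 - 1/K)^K · F S ≤ e⁻¹ · F S`.
-/

open Finset

/-- A greedy sequence for objective `g`: start from `∅` and at each step insert an
element of maximal resulting objective value. -/
def IsGreedySeq {T : Type*} [DecidableEq T] (g : Finset T → ℝ)
    (seq : ℕ → Finset T) : Prop :=
  seq 0 = ∅ ∧ ∀ i : ℕ, ∃ t : T, seq (i + 1) = insert t (seq i) ∧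
    ∀ t' : T, g (insert t' (seq i)) ≤ g (insert t (seq i))

section

variable {T : Type*} [DecidableEq T]

def IsSubmodular (F : Finset T → ℝ) : Prop :=
  ∀ (A B : Finset T) (t : T), A ⊆ B → t ∉ B → F (insert t B) - F B ≤ F (insert t A) - F A

theorem IsSubmodular.sub_le_sum_marginal {F : Finset T → ℝ} (hsub : IsSubmodular F)
    (hmono : Monotone F) (S A : Finset T) :
    F (S ∪ A) - F A ≤ ∑ t ∈ S, (F (insert t A) - F A) := by
  induction S using Finset.induction_on with
  | empty => simp
  | @insert s S hs ih =>
    rw [sum_insert hs, insert_union]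
    have hs_gain : F (insert s (S ∪ A)) - F (S ∪ A) ≤ F (insert s A) - F A := by
      by_cases hsA : s ∈ S ∪ A
      · rw [insert_eq_self.mpr hsA, sub_self, sub_nonneg]
        exact hmono (subset_insert s A)
      · exact hsub A (S ∪ A) s subset_union_right hsA
    linarith

namespace IsGreedySeq

variable {F : Finset T → ℝ} {seq : ℕ → Finset T}

theorem apply_insert_le (hgreedy : IsGreedySeq F seq) (i : ℕ) (t : T) :
    F (insert t (seq i)) ≤ F (seq (i + 1)) := by
  obtain ⟨s, hs, hmax⟩ := hgreedy.2 i
  exact hs ▸ hmax t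

theorem apply_le_apply_succ (hgreedy : IsGreedySeq F seq) (hmono : Monotone F) (i : ℕ) :
    F (seq i) ≤ F (seq (i + 1)) := by
  obtain ⟨s, hs, -⟩ := hgreedy.2 i
  exact hmono (hs ▸ subset_insert s (seq i))

theorem sub_le_card_mul_gain (hgreedy : IsGreedySeq F seq) (hmono : Monotone F)
    (hsub : IsSubmodular F) (S : Finset T) (i : ℕ) :
    F S - F (seq i) ≤ #S * (F (seq (i + 1)) - F (seq i)) :=
  calc F S - F (seq i)
      ≤ F (S ∪ seq i) - F (seq i) := by gcongr; exact hmono subset_union_left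
    _ ≤ ∑ t ∈ S, (F (insert t (seq i)) - F (seq i)) := hsub.sub_le_sum_marginal hmono S _
    _ ≤ ∑ _t ∈ S, (F (seq (i + 1)) - F (seq i)) :=
        sum_le_sum fun t _ => by gcongr; exact hgreedy.apply_insert_le i t
    _ = #S * (F (seq (i + 1)) - F (seq i)) := by rw [sum_const, nsmul_eq_mul]

theorem gap_succ_le (hgreedy : IsGreedySeq F seq) (hmono : Monotone F)
    (hsub : IsSubmodular F) {K : ℕ} (hK : 0 < K) {S : Finset T} (hS : #S ≤ K) (i : ℕ) :
    F S - F (seq (i + 1)) ≤ (1 - 1 / (K : ℝ)) * (F S - F (seq i)) := by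
  have hKpos : (0 : ℝ) < K := by exact_mod_cast hK
  have hgap : F S - F (seq i) ≤ K * (F (seq (i + 1)) - F (seq i)) :=
    (hgreedy.sub_le_card_mul_gain hmono hsub S i).trans <|
      mul_le_mul_of_nonneg_right (by exact_mod_cast hS)
        (sub_nonneg.mpr (hgreedy.apply_le_apply_succ hmono i))
  have hdiv : (F S - F (seq i)) / K ≤ F (seq (i + 1)) - F (seq i) := by
    rwa [div_le_iff₀ hKpos, mul_comm]
  calc F S - F (seq (i + 1)) ≤ (F S - F (seq i)) - (F S - F (seq i)) / K := by linarith
    _ = (1 - 1 / (K : ℝ)) * (F S - F (seq i)) := by ring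

theorem gap_le_pow (hgreedy : IsGreedySeq F seq) (hmono : Monotone F)
    (hsub : IsSubmodular F) (h0 : F ∅ = 0) {K : ℕ} (hK : 0 < K) {S : Finset T}
    (hS : #S ≤ K) (i : ℕ) :
    F S - F (seq i) ≤ (1 - 1 / (K : ℝ)) ^ i * F S := by
  have hc : 0 ≤ 1 - 1 / (K : ℝ) := by
    rw [sub_nonneg, div_le_one (by exact_mod_cast hK)]
    exact_mod_cast hK
  induction i with
  | zero => simp [hgreedy.1, h0]
  | succ n ih =>
    calc F S - F (seq (n + 1)) ≤ (1 - 1 / (K : ℝ)) * (F S - F (seq n)) :=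
          hgreedy.gap_succ_le hmono hsub hK hS n
      _ ≤ (1 - 1 / (K : ℝ)) * ((1 - 1 / (K : ℝ)) ^ n * F S) := by gcongr
      _ = (1 - 1 / (K : ℝ)) ^ (n + 1) * F S := by ring

end IsGreedySeq

end

theorem one_sub_one_div_pow_le_inv_exp {K : ℕ} (hK : 0 < K) :
    (1 - 1 / (K : ℝ)) ^ K ≤ 1 / Real.exp 1 := by
  rw [one_div (Real.exp 1), ← Real.exp_neg]
  exact Real.one_sub_div_pow_le_exp_neg (by exact_mod_cast hK)

theorem greedy_submodular_guarantee_general {T : Type*} [DecidableEq T]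
    (F : Finset T → ℝ)
    (hmono : ∀ A B : Finset T, A ⊆ B → F A ≤ F B)
    (hsub : ∀ (A B : Finset T) (t : T), A ⊆ B → t ∉ B →
      F (insert t B) - F B ≤ F (insert t A) - F A)
    (h0 : F ∅ = 0)
    (K : ℕ) (hK : 0 < K) (seq : ℕ → Finset T) (hgreedy : IsGreedySeq F seq) :
    ∀ S : Finset T, S.card ≤ K →
      (1 - (1 - 1 / (K : ℝ)) ^ K) * F S ≤ F (seq K) ∧
      (1 - 1 / Real.exp 1) * F S ≤ F (seq K) := by
  intro S hS
  have hgap := hgreedy.gap_le_pow (fun A B => hmono A B) hsub h0 hK hS K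
  have hFS : 0 ≤ F S := h0 ▸ hmono ∅ S (empty_subset S)
  have hfirst : (1 - (1 - 1 / (K : ℝ)) ^ K) * F S ≤ F (seq K) := by linarith
  refine ⟨hfirst, le_trans ?_ hfirst⟩
  gcongr
  exact one_sub_one_div_pow_le_inv_exp hK

/-- Nemhauser–Wolsey–Fisher: for a nonnegative monotone submodular `F` with `F(∅) = 0`,
the greedy algorithm after `K` steps satisfies
`F(S_g) ≥ (1 − (1 − 1/K)^K)·max_{|S|≤K} F(S) ≥ (1 − 1/e)·max_{|S|≤K} F(S)`. -/
theorem greedy_submodular_guarantee {T : Type*} [Fintype T] [DecidableEq T]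
    (F : Finset T → ℝ)
    (hnonneg : ∀ S : Finset T, 0 ≤ F S)
    (hmono : ∀ A B : Finset T, A ⊆ B → F A ≤ F B)
    (hsub : ∀ (A B : Finset T) (t : T), A ⊆ B → t ∉ B →
      F (insert t B) - F B ≤ F (insert t A) - F A)
    (h0 : F ∅ = 0)
    (K : ℕ) (hK : 0 < K) (seq : ℕ → Finset T) (hgreedy : IsGreedySeq F seq) :
    ∀ S : Finset T, S.card ≤ K →
      (1 - (1 - 1 / (K : ℝ)) ^ K) * F S ≤ F (seq K) ∧
      (1 - 1 / Real.exp 1) * F S ≤ F (seq K) :=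
  greedy_submodular_guarantee_general F hmono hsub h0 K hK seq hgreedy
end
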